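/- Suppose s ∈ C_E, and for every vertex v a set A(v) of enforcements valid for v in G' is given. Let MOVE = ⋃{A(w) : χ(w) = t}; let LOOPED = {P with s removed from its domain : P ∈ MOVE, P(s) is defined and even}; let OPT = MOVE ∪ LOOPED; and for a vertex v let B(v) be the ⊑-up-closure of the set A(v) ∪ {Merge(Q, s, R) : Q ∈ A(v), s ∈ dom Q, R ∈ OPT}. Then B(v) is sound for v in G'': for every P ∈ B(v) there exists a strategy ρ that is safe from v in G'' with Φ(G'', ρ, v) ⊑ P. -/

import Mathlib

open Classical

/-- `p ≺ q` iff `(-1)^p * p < (-1)^q * q` computed in `ℤ`. -/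
def prec (p q : ℕ) : Prop := ((-1 : ℤ) ^ p * p < (-1 : ℤ) ^ q * q)

/-- `p ⪯ q` iff `p ≺ q` or `p = q`. -/
def preceq (p q : ℕ) : Prop := prec p q ∨ p = q

/-- An enforcement is a partial function `C ⇀ ℕ`, modelled as `C → Option ℕ`.
`esub P Q` is the relation `P ⊑ Q`: `dom P ⊆ dom Q` and for every `a ∈ dom P`,
`Q a ⪯ P a`. -/
def esub {C : Type*} (P Q : C → Option ℕ) : Prop :=
  ∀ a p, P a = some p → ∃ q, Q a = some q ∧ preceq q p

/-- The `⪯`-minimum of a set of naturals, when it exists. -/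
noncomputable def pmin (S : Set ℕ) : Option ℕ :=
  if h : ∃ m ∈ S, ∀ x ∈ S, preceq m x then some h.choose else none

/-- The union `P ⊔ Q`: its domain is `dom P ∪ dom Q` and its value at `a`
is the `⪯`-minimum of the defined ones among `P a`, `Q a`. -/
noncomputable def eunion {C : Type*} (P Q : C → Option ℕ) : C → Option ℕ := fun a =>
  match P a, Q a with
  | none, q => q
  | some p, none => some p
  | some p, some q => some (if preceq p q then p else q)

/-- The lift `Q↑r`: same domain as `Q`, value `max (Q a) r`. -/
def elift {C : Type*} (Q : C → Option ℕ) (r : ℕ) : C → Option ℕ :=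
  fun a => (Q a).map fun q => max q r

/-- `Merge(P, c, Q)`, where `CE` is the set of colors of player E (the colors of
player O form its complement). -/
noncomputable def emerge {C : Type*} (CE : Set C) (P : C → Option ℕ) (c : C)
    (Q : C → Option ℕ) : C → Option ℕ :=
  match P c with
  | none => P
  | some r =>
      if c ∈ CE then eunion (fun a => if a = c then none else P a) (elift Q r)
      else eunion P (elift Q r)

/-- An arena: a directed graph with vertices partitioned between the players;
`owner u = true` means `u` belongs to player E. -/
structure Arena (V : Type*) where
  owner : V → Bool
  edge : V → V → Prop

/-- A strategy for player E in a stop parity game on arena `A`: to every finite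
history (the list of previously visited vertices) and current vertex `u ∈ V_E` it
assigns either a vertex `w` with `edge u w` (`some w`) or the move STOP (`none`). -/
structure EStrategy {V : Type*} (A : Arena V) where
  move : List V → V → Option V
  legal : ∀ h u w, move h u = some w → A.edge u w

/-- A play from `v` in the stop parity game on arena `A`: a maximal sequence of
vertices starting at `v` and following edges; a finite play either is ended
by the STOP move of player E at one of his vertices (`stopped = true`) or ends at
a vertex with no outgoing edges (`stopped = false`). -/
structure Play {V : Type*} (A : Arena V) (v : V) where
  seq : ℕ → Option V
  stopped : Bool
  start : seq 0 = some v
  none_succ : ∀ n, seq n = none → seq (n + 1) = none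
  step : ∀ n u w, seq n = some u → seq (n + 1) = some w → A.edge u w
  maximal : ∀ n u, seq n = some u → seq (n + 1) = none →
    (stopped = true ∧ A.owner u = true) ∨ (stopped = false ∧ ∀ w, ¬ A.edge u w)

/-- The history of a play before position `n` (the list of its first `n` vertices). -/
def Play.hist {V : Type*} {A : Arena V} {v : V} (p : Play A v) (n : ℕ) : List V :=
  (List.range n).filterMap p.seq

/-- A play is consistent with a strategy `ρ` of player E if every move made from a
vertex of player E is the one prescribed by `ρ` (where `ρ` prescribing `none` means
that the play is ended by STOP). -/
def ConsistentWith {V : Type*} {A : Arena V} {v : V} (ρ : EStrategy A) (p : Play A v) :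
    Prop :=
  ∀ n u, p.seq n = some u → A.owner u = true →
    p.seq (n + 1) = ρ.move (p.hist n) u ∧ (p.seq (n + 1) = none → p.stopped = true)

/-- A play is finite if its sequence is eventually `none`. -/
def Play.IsFinite {V : Type*} {A : Arena V} {v : V} (p : Play A v) : Prop :=
  ∃ n, p.seq n = none

/-- A play ended by the STOP move. -/
def Play.EndedByStop {V : Type*} {A : Arena V} {v : V} (p : Play A v) : Prop :=
  p.IsFinite ∧ p.stopped = true

/-- The maximum rank occurring infinitely often on a play. -/
noncomputable def infRank {V : Type*} {A : Arena V} {v : V} (rank : V → ℕ)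
    (p : Play A v) : ℕ :=
  sSup {r | ∀ N, ∃ n, N ≤ n ∧ ∃ u, p.seq n = some u ∧ rank u = r}

/-- Player O wins a play: it is finite, not ended by STOP, and ends at a vertex of
player E, or it is infinite and the maximum rank occurring infinitely often is odd. -/
def OWinsPlay {V : Type*} {A : Arena V} {v : V} (rank : V → ℕ) (p : Play A v) : Prop :=
  (∃ n u, p.seq n = some u ∧ p.seq (n + 1) = none ∧ p.stopped = false ∧
    A.owner u = true) ∨
  ((∀ n, p.seq n ≠ none) ∧ Odd (infRank rank p))

/-- Player E wins a play: it is finite, not ended by STOP, and ends at a vertex of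
player O, or it is infinite and the maximum rank occurring infinitely often is even. -/
def EWinsPlay {V : Type*} {A : Arena V} {v : V} (rank : V → ℕ) (p : Play A v) : Prop :=
  (∃ n u, p.seq n = some u ∧ p.seq (n + 1) = none ∧ p.stopped = false ∧
    A.owner u = false) ∨
  ((∀ n, p.seq n ≠ none) ∧ Even (infRank rank p))

/-- A strategy is safe from `v` if no play from `v` consistent with it is won by O. -/
def SafeFrom {V : Type*} (A : Arena V) (rank : V → ℕ) (ρ : EStrategy A) (v : V) : Prop :=
  ∀ p : Play A v, ConsistentWith ρ p → ¬ OWinsPlay rank p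

/-- A strategy is winning from `v` if every play from `v` consistent with it is won
by E. -/
def WinningFrom {V : Type*} (A : Arena V) (rank : V → ℕ) (ρ : EStrategy A) (v : V) :
    Prop :=
  ∀ p : Play A v, ConsistentWith ρ p → EWinsPlay rank p

/-- A strategy of the ordinary parity game: it never plays STOP when an outgoing
edge exists. -/
def NonStopping {V : Type*} {A : Arena V} (ρ : EStrategy A) : Prop :=
  ∀ h u, A.owner u = true → (∃ w, A.edge u w) → ρ.move h u ≠ none

/-- A strategy is positional if its move depends only on the current vertex. -/
def Positional {V : Type*} {A : Arena V} (ρ : EStrategy A) : Prop :=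
  ∀ h h' u, ρ.move h u = ρ.move h' u

/-- `ConsPath A ρ v h u`: starting at `v` there is a finite prefix of a play
consistent with `ρ` whose already-visited vertices are `h` and whose current
(last) vertex is `u`; the full prefix is `h ++ [u]`. -/
inductive ConsPath {V : Type*} (A : Arena V) (ρ : EStrategy A) (v : V) :
    List V → V → Prop
  | refl : ConsPath A ρ v [] v
  | stepO (h : List V) (u w : V) :
      ConsPath A ρ v h u → A.owner u = false → A.edge u w → ConsPath A ρ v (h ++ [u]) w
  | stepE (h : List V) (u w : V) :
      ConsPath A ρ v h u → A.owner u = true → ρ.move h u = some w →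
      ConsPath A ρ v (h ++ [u]) w

/-- The maximum rank of a vertex on a finite prefix of a play. -/
def maxRank {V : Type*} (rank : V → ℕ) (l : List V) : ℕ := (l.map rank).foldr max 0

/-- The enforcement `Φ(G, ρ, v)` of a strategy `ρ` from a vertex `v` in the stop
parity game with player-aware coloring `χ`: its value at a color `c` is the
`⪯`-minimum of the maximum ranks of finite prefixes of plays from `v` consistent
with `ρ` that end at a vertex `w` of color `c`, where for `w ∈ V_E` only prefixes
at which `ρ` answers STOP are considered (undefined if there is no such prefix). -/
noncomputable def Phi {V C : Type*} (A : Arena V) (rank : V → ℕ) (χ : V → C)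
    (ρ : EStrategy A) (v : V) : C → Option ℕ :=
  fun c => pmin {r | ∃ (w : V) (h : List V), χ w = c ∧ ConsPath A ρ v h w ∧
    (A.owner w = true → ρ.move h w = none) ∧ r = maxRank rank (h ++ [w])}

/-- A set `S` of enforcements is valid for `v`: sound, complete and up-closed. -/
def ValidFamily {V C : Type*} (A : Arena V) (rank : V → ℕ) (χ : V → C) (v : V)
    (S : Set (C → Option ℕ)) : Prop :=
  (∀ P ∈ S, ∃ ρ : EStrategy A, SafeFrom A rank ρ v ∧ esub (Phi A rank χ ρ v) P) ∧
  (∀ ρ : EStrategy A, Positional ρ → SafeFrom A rank ρ v → Phi A rank χ ρ v ∈ S) ∧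
  (∀ P ∈ S, ∀ Q, esub P Q → Q ∈ S)

/-- The arena obtained by adding a directed edge from every vertex of color `s` to
every vertex of color `t`. -/
def addEdges {V C : Type*} (A : Arena V) (χ : V → C) (s t : C) : Arena V where
  owner := A.owner
  edge := fun u w => A.edge u w ∨ (χ u = s ∧ χ w = t)

/-- The enforcement `P` with the color `c` removed from its domain. -/
noncomputable def removeColor {C : Type*} (P : C → Option ℕ) (c : C) : C → Option ℕ :=
  fun a => if a = c then none else P a


attribute [local instance] Classical.propDecidable

lemma preceq_iff (a b : ℕ) : preceq a b ↔
    (a % 2 = 0 ∧ b % 2 = 0 ∧ a ≤ b) ∨ (a % 2 = 1 ∧ b % 2 = 0) ∨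
    (a % 2 = 1 ∧ b % 2 = 1 ∧ b ≤ a) := by
  have h : ∀ n : ℕ, ((-1 : ℤ)) ^ n = if n % 2 = 0 then 1 else -1 := by
    intro n
    rcases Nat.even_or_odd n with h | h
    · rw [h.neg_one_pow, if_pos (Nat.even_iff.mp h)]
    · rw [h.neg_one_pow, if_neg (by simpa using Nat.odd_iff.mp h)]
  unfold preceq prec
  rw [h a, h b]
  constructor
  · rintro (hlt | rfl)
    · split_ifs at hlt with h1 h2 <;>
        simp only [one_mul, neg_mul, neg_lt_neg_iff] at hlt <;>
        first
          | (left; exact ⟨h1, h2, by exact_mod_cast hlt.le⟩)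
          | (right; left; exact ⟨by omega, h2⟩)
          | omega
          | (right; right; refine ⟨by omega, by omega, ?_⟩; exact_mod_cast hlt.le)
    · omega
  · intro hc
    rcases hc with ⟨h1, h2, h3⟩ | ⟨h1, h2⟩ | ⟨h1, h2, h3⟩
    · rcases Nat.eq_or_lt_of_le h3 with rfl | h4
      · right; rfl
      · left; rw [if_pos h1, if_pos h2]; simp only [one_mul]; exact_mod_cast h4
    · left; rw [if_neg (by omega), if_pos h2]
      have hb : (0:ℤ) ≤ b := Int.ofNat_nonneg b
      have ha : (1:ℤ) ≤ a := by exact_mod_cast Nat.one_le_iff_ne_zero.mpr (by omega)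
      nlinarith
    · rcases Nat.eq_or_lt_of_le h3 with h4 | h4
      · right; omega
      · left; rw [if_neg (by omega), if_neg (by omega)]
        simp only [neg_mul, one_mul, neg_lt_neg_iff]; exact_mod_cast h4

lemma preceq_refl (a : ℕ) : preceq a a := Or.inr rfl

lemma preceq_trans {a b c : ℕ} (h1 : preceq a b) (h2 : preceq b c) : preceq a c := by
  rw [preceq_iff] at *; omega

lemma preceq_total (a b : ℕ) : preceq a b ∨ preceq b a := by
  rw [preceq_iff, preceq_iff]; omega

lemma preceq_max_mono {a a' b b' : ℕ} (h1 : preceq a a') (h2 : preceq b b') :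
    preceq (max a b) (max a' b') := by
  rw [preceq_iff] at *; omega

lemma preceq_max_even {x g y : ℕ} (h1 : preceq x g) (h2 : y % 2 = 0) :
    preceq x (max g y) := by
  rw [preceq_iff] at *; omega

lemma preceq_even {x y : ℕ} (h1 : preceq x y) (h2 : x % 2 = 0) : y % 2 = 0 ∧ x ≤ y := by
  rw [preceq_iff] at h1; omega

lemma esub_trans {C : Type*} {P Q R : C → Option ℕ} (h1 : esub P Q) (h2 : esub Q R) :
    esub P R := by
  intro a p hp
  obtain ⟨q, hq, hqp⟩ := h1 a p hp
  obtain ⟨q', hq', hq'q⟩ := h2 a q hq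
  exact ⟨q', hq', preceq_trans hq'q hqp⟩

lemma pmin_eq_some {S : Set ℕ} {p : ℕ} (h : pmin S = some p) :
    p ∈ S ∧ ∀ x ∈ S, preceq p x := by
  unfold pmin at h
  split_ifs at h with hex
  · obtain ⟨h1, h2⟩ := hex.choose_spec
    obtain rfl : hex.choose = p := by injection h
    exact ⟨h1, h2⟩

lemma pmin_spec {S : Set ℕ} {M : ℕ} (hne : S.Nonempty) (hb : ∀ x ∈ S, x ≤ M) :
    ∃ m, pmin S = some m ∧ m ∈ S ∧ ∀ x ∈ S, preceq m x := by
  have hfin : S.Finite := Set.Finite.subset (Set.finite_Iic M) (fun x hx => hb x hx)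
  obtain ⟨m, hm, hmin⟩ := Set.exists_min_image S
    (fun n => if n % 2 = 0 then M + 1 + n else M + 1 - n) hfin hne
  have hex : ∃ m ∈ S, ∀ x ∈ S, preceq m x := by
    refine ⟨m, hm, fun x hx => ?_⟩
    have h1 := hmin x hx
    have h2 := hb m hm
    have h3 := hb x hx
    rw [preceq_iff]
    split_ifs at h1 <;> omega
  rw [pmin, dif_pos hex]
  exact ⟨hex.choose, rfl, hex.choose_spec.1, hex.choose_spec.2⟩

lemma maxRank_append {V : Type*} (rank : V → ℕ) (l₁ l₂ : List V) :
    maxRank rank (l₁ ++ l₂) = max (maxRank rank l₁) (maxRank rank l₂) := by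
  induction l₁ with
  | nil => simp [maxRank]
  | cons x l ih => simp [maxRank, List.map_cons, List.foldr_cons] at ih ⊢; omega

lemma le_maxRank {V : Type*} (rank : V → ℕ) {u : V} {l : List V} (h : u ∈ l) :
    rank u ≤ maxRank rank l := by
  induction l with
  | nil => cases h
  | cons x l ih =>
    rcases List.mem_cons.mp h with rfl | h
    · simp [maxRank]
    · have := ih h; simp [maxRank] at this ⊢; omega

lemma maxRank_le {V : Type*} (rank : V → ℕ) {M : ℕ} {l : List V}
    (h : ∀ u ∈ l, rank u ≤ M) : maxRank rank l ≤ M := by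
  induction l with
  | nil => simp [maxRank]
  | cons x l ih =>
    have h1 := h x List.mem_cons_self
    have h2 := ih fun u hu => h u (List.mem_cons_of_mem _ hu)
    simp [maxRank] at h2 ⊢; omega

lemma maxRank_attained {V : Type*} (rank : V → ℕ) {l : List V} (h : l ≠ []) :
    ∃ u ∈ l, maxRank rank l = rank u := by
  induction l with
  | nil => exact absurd rfl h
  | cons x l ih =>
    rcases eq_or_ne l [] with rfl | hl
    · exact ⟨x, List.mem_cons_self, by simp [maxRank]⟩
    · obtain ⟨u, hu, hru⟩ := ih hl
      simp only [maxRank, List.map_cons, List.foldr_cons]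
      rcases Nat.le_total (rank x) ((l.map rank).foldr max 0) with h1 | h1
      · exact ⟨u, List.mem_cons_of_mem _ hu, by rw [Nat.max_eq_right h1]; exact hru⟩
      · exact ⟨x, List.mem_cons_self, by rw [Nat.max_eq_left h1]⟩

lemma filterMap_somes {α β : Type*} (g : α → Option β) (g' : α → β) (l : List α)
    (h : ∀ a ∈ l, g a = some (g' a)) : l.filterMap g = l.map g' := by
  induction l with
  | nil => rfl
  | cons x l ih =>
    rw [List.filterMap_cons, h x List.mem_cons_self, List.map_cons,
      ih (fun a ha => h a (List.mem_cons_of_mem _ ha))]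

lemma pigeon (g : ℕ → ℕ) (B : ℕ) (hg : ∀ n, g n ≤ B) (P : ℕ → Prop)
    (h : ∀ N, ∃ n, N ≤ n ∧ P n) :
    ∃ r, ∀ N, ∃ n, N ≤ n ∧ P n ∧ g n = r := by
  by_contra hc
  push_neg at hc
  choose N hN using hc
  set M := (Finset.range (B + 1)).sup N with hM
  obtain ⟨n, hn, hPn⟩ := h M
  have h1 : N (g n) ≤ M := Finset.le_sup (Finset.mem_range.mpr (Nat.lt_succ_of_le (hg n)))
  rcases hN (g n) n (le_trans h1 hn) with h2
  exact h2 hPn rfl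

section Merged

attribute [local instance] Classical.propDecidable

variable {V C : Type*} (A : Arena V) (rank : V → ℕ) (CE : Set C) (χ : V → C)
  (s t : C) (ρQ ρR : EStrategy A) (w_t : V) (loop : Bool)

/-- One step of the history parser of the merged strategy. -/
noncomputable def mstep : Bool × List V → V → Bool × List V := fun st u =>
  match st with
  | (false, h) =>
      if χ u = s ∧ ρQ.move h u = none then (true, []) else (false, h ++ [u])
  | (true, h) =>
      if loop = true ∧ χ u = s ∧ ρR.move h u = none then (true, []) else (true, h ++ [u])

/-- The history parser of the merged strategy. -/
noncomputable def parse (h : List V) : Bool × List V :=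
  h.foldl (mstep A χ s ρQ ρR loop) (false, [])

lemma parse_nil : parse A χ s ρQ ρR loop [] = (false, []) := rfl

lemma parse_append (h : List V) (u : V) :
    parse A χ s ρQ ρR loop (h ++ [u]) =
      mstep A χ s ρQ ρR loop (parse A χ s ρQ ρR loop h) u := by
  simp [parse, List.foldl_append]

/-- The move function of the merged strategy. -/
noncomputable def mmove : List V → V → Option V := fun h u =>
  match parse A χ s ρQ ρR loop h with
  | (false, h₁) => if χ u = s ∧ ρQ.move h₁ u = none then some w_t else ρQ.move h₁ u
  | (true, h₂) =>
      if loop = true ∧ χ u = s ∧ ρR.move h₂ u = none then some w_t else ρR.move h₂ u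

variable (hwt : χ w_t = t)

/-- The merged strategy. -/
noncomputable def mstrat : EStrategy (addEdges A χ s t) where
  move := mmove A χ s ρQ ρR w_t loop
  legal := by
    intro h u w hm
    unfold mmove at hm
    rcases hp : parse A χ s ρQ ρR loop h with ⟨b, h'⟩
    rw [hp] at hm
    cases b <;> simp only at hm <;> split_ifs at hm with hc
    · obtain rfl : w_t = w := by injection hm
      exact Or.inr ⟨hc.1, hwt⟩
    · exact Or.inl (ρQ.legal _ _ _ hm)
    · obtain rfl : w_t = w := by injection hm
      exact Or.inr ⟨hc.2.1, hwt⟩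
    · exact Or.inl (ρR.legal _ _ _ hm)

end Merged

section Merged2

attribute [local instance] Classical.propDecidable

variable {V C : Type*} (A : Arena V) (rank : V → ℕ) (CE : Set C) (χ : V → C)
  (s t : C) (ρQ ρR : EStrategy A) (w_t : V) (loop : Bool) (hwt : χ w_t = t)

lemma mstep_false (h : List V) (u : V) :
    mstep A χ s ρQ ρR loop (false, h) u =
      if χ u = s ∧ ρQ.move h u = none then (true, []) else (false, h ++ [u]) := rfl

lemma mstep_true (h : List V) (u : V) :
    mstep A χ s ρQ ρR loop (true, h) u =
      if loop = true ∧ χ u = s ∧ ρR.move h u = none then (true, [])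
      else (true, h ++ [u]) := rfl

lemma mmove_false {h : List V} {h₁ : List V} (hp : parse A χ s ρQ ρR loop h = (false, h₁))
    (u : V) : mmove A χ s ρQ ρR w_t loop h u =
      if χ u = s ∧ ρQ.move h₁ u = none then some w_t else ρQ.move h₁ u := by
  unfold mmove; rw [hp]

lemma mmove_true {h : List V} {h₂ : List V} (hp : parse A χ s ρQ ρR loop h = (true, h₂))
    (u : V) : mmove A χ s ρQ ρR w_t loop h u =
      if loop = true ∧ χ u = s ∧ ρR.move h₂ u = none then some w_t
      else ρR.move h₂ u := by
  unfold mmove; rw [hp]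

variable (hχ : ∀ u, A.owner u = true ↔ χ u ∈ CE) (hs : s ∈ CE)

include hχ hs in
lemma owner_false_ne_s {u : V} (h : A.owner u = false) : χ u ≠ s := by
  intro hus
  have := (hχ u).mpr (hus ▸ hs)
  rw [this] at h; cases h

include hχ hs in
lemma cp_phase1 {v : V} {h : List V} {u : V} (hcp : ConsPath A ρQ v h u) :
    parse A χ s ρQ ρR loop h = (false, h) ∧
      ConsPath (addEdges A χ s t) (mstrat A χ s t ρQ ρR w_t loop hwt) v h u := by
  induction hcp with
  | refl => exact ⟨rfl, ConsPath.refl⟩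
  | stepO h u w hcp how hedge ih =>
    obtain ⟨hp, hcp'⟩ := ih
    have hne : χ u ≠ s := owner_false_ne_s A CE χ s hχ hs how
    constructor
    · rw [parse_append, hp, mstep_false, if_neg (by tauto)]
    · exact ConsPath.stepO h u w hcp' how (Or.inl hedge)
  | stepE h u w hcp how hmv ih =>
    obtain ⟨hp, hcp'⟩ := ih
    have hcond : ¬(χ u = s ∧ ρQ.move h u = none) := by
      rintro ⟨-, h2⟩; rw [hmv] at h2; cases h2
    constructor
    · rw [parse_append, hp, mstep_false, if_neg hcond]
    · refine ConsPath.stepE h u w hcp' how ?_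
      show mmove A χ s ρQ ρR w_t loop h u = some w
      rw [mmove_false A χ s ρQ ρR w_t loop hp, if_neg hcond, hmv]

include hχ hs in
lemma cp_phase2 {v : V} {H : List V} (hH : parse A χ s ρQ ρR loop H = (true, []))
    (hcpH : ConsPath (addEdges A χ s t) (mstrat A χ s t ρQ ρR w_t loop hwt) v H w_t)
    {h₂ : List V} {u : V} (hcp : ConsPath A ρR w_t h₂ u) :
    parse A χ s ρQ ρR loop (H ++ h₂) = (true, h₂) ∧
      ConsPath (addEdges A χ s t) (mstrat A χ s t ρQ ρR w_t loop hwt) v (H ++ h₂) u := by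
  induction hcp with
  | refl => simpa using ⟨hH, hcpH⟩
  | stepO h u w hcp how hedge ih =>
    obtain ⟨hp, hcp'⟩ := ih
    have hne : χ u ≠ s := owner_false_ne_s A CE χ s hχ hs how
    constructor
    · rw [← List.append_assoc, parse_append, hp, mstep_true, if_neg (by tauto)]
    · rw [← List.append_assoc]
      exact ConsPath.stepO _ u w hcp' how (Or.inl hedge)
  | stepE h u w hcp how hmv ih =>
    obtain ⟨hp, hcp'⟩ := ih
    have hcond : ¬(loop = true ∧ χ u = s ∧ ρR.move h u = none) := by
      rintro ⟨-, -, h2⟩; rw [hmv] at h2; cases h2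
    constructor
    · rw [← List.append_assoc, parse_append, hp, mstep_true, if_neg hcond]
    · rw [← List.append_assoc]
      refine ConsPath.stepE _ u w hcp' how ?_
      show mmove A χ s ρQ ρR w_t loop (H ++ h) u = some w
      rw [mmove_true A χ s ρQ ρR w_t loop hp, if_neg hcond, hmv]

/-- Every maximal-rank value of a consistent stop-prefix is `⪯`-above the
corresponding enforcement value. -/
lemma stop_prefix_bound {B : ℕ} (hB : ∀ u, rank u ≤ B) (ρ : EStrategy A) (x : V)
    {P' : C → Option ℕ} (hesub : esub (Phi A rank χ ρ x) P') {h : List V} {w : V}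
    (hcp : ConsPath A ρ x h w) (hstop : A.owner w = true → ρ.move h w = none) :
    ∃ q, P' (χ w) = some q ∧ preceq q (maxRank rank (h ++ [w])) := by
  set S := {r | ∃ (w' : V) (h' : List V), χ w' = χ w ∧ ConsPath A ρ x h' w' ∧
    (A.owner w' = true → ρ.move h' w' = none) ∧ r = maxRank rank (h' ++ [w'])} with hS
  have hmem : maxRank rank (h ++ [w]) ∈ S := ⟨w, h, rfl, hcp, hstop, rfl⟩
  have hbdd : ∀ y ∈ S, y ≤ B := by
    rintro y ⟨w', h', -, -, -, rfl⟩
    exact maxRank_le rank (fun u _ => hB u)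
  obtain ⟨m, hm, hmS, hmin⟩ := pmin_spec ⟨_, hmem⟩ hbdd
  have hPhi : Phi A rank χ ρ x (χ w) = some m := hm
  obtain ⟨q, hq, hqm⟩ := hesub (χ w) m hPhi
  exact ⟨q, hq, preceq_trans hqm (hmin _ hmem)⟩

end Merged2

section Merged3

attribute [local instance] Classical.propDecidable

variable {V C : Type*} (A : Arena V) (rank : V → ℕ) (CE : Set C) (χ : V → C)
  (s t : C) (ρQ ρR : EStrategy A) (w_t : V) (loop : Bool) (hwt : χ w_t = t)
  (hχ : ∀ u, A.owner u = true ↔ χ u ∈ CE) (hs : s ∈ CE)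
  {B : ℕ} (hB : ∀ u, rank u ≤ B)
  {Q R' : C → Option ℕ} {v : V} {r : ℕ}
  (hQ : esub (Phi A rank χ ρQ v) Q) (hQs : Q s = some r)
  (hR : esub (Phi A rank χ ρR w_t) R')
  (hloopR : loop = true → ∃ r₀, R' s = some r₀ ∧ r₀ % 2 = 0)

include hχ hs hB hQ hQs hR hloopR in
lemma merged_inv {H : List V} {u : V}
    (hcp : ConsPath (addEdges A χ s t) (mstrat A χ s t ρQ ρR w_t loop hwt) v H u) :
    (parse A χ s ρQ ρR loop H = (false, H) ∧ ConsPath A ρQ v H u) ∨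
    (∃ H₁ h₂, H = H₁ ++ h₂ ∧ parse A χ s ρQ ρR loop H = (true, h₂) ∧
      ConsPath A ρR w_t h₂ u ∧ preceq r (maxRank rank H₁)) := by
  induction hcp with
  | refl => exact Or.inl ⟨rfl, ConsPath.refl⟩
  | stepO h u w hcp how hedge ih =>
    have hne : χ u ≠ s := owner_false_ne_s A CE χ s hχ hs how
    have hedge' : A.edge u w := by
      rcases hedge with h1 | ⟨h1, -⟩
      · exact h1
      · exact absurd h1 hne
    rcases ih with ⟨hp, hcp'⟩ | ⟨H₁, h₂, rfl, hp, hcp', hpre⟩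
    · exact Or.inl ⟨by rw [parse_append, hp, mstep_false, if_neg (by tauto)],
        ConsPath.stepO h u w hcp' how hedge'⟩
    · refine Or.inr ⟨H₁, h₂ ++ [u], by rw [List.append_assoc],
        ?_, ConsPath.stepO h₂ u w hcp' how hedge', hpre⟩
      rw [parse_append, hp, mstep_true, if_neg (by tauto)]
  | stepE h u w hcp how hmv ih =>
    rcases ih with ⟨hp, hcp'⟩ | ⟨H₁, h₂, rfl, hp, hcp', hpre⟩
    · rw [show (mstrat A χ s t ρQ ρR w_t loop hwt).move = mmove A χ s ρQ ρR w_t loop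
        from rfl, mmove_false A χ s ρQ ρR w_t loop hp] at hmv
      by_cases hc : χ u = s ∧ ρQ.move h u = none
      · -- jump from phase 1
        rw [if_pos hc] at hmv
        obtain rfl : w_t = w := by injection hmv
        refine Or.inr ⟨h ++ [u], [], by simp, ?_, ConsPath.refl, ?_⟩
        · rw [parse_append, hp, mstep_false, if_pos hc]
        · obtain ⟨q, hq, hqle⟩ := stop_prefix_bound A rank χ hB ρQ v hQ hcp'
            (fun _ => hc.2)
          rw [hc.1, hQs] at hq
          obtain rfl : r = q := by injection hq
          exact hqle
      · rw [if_neg hc] at hmv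
        exact Or.inl ⟨by rw [parse_append, hp, mstep_false, if_neg hc],
          ConsPath.stepE h u w hcp' how hmv⟩
    · rw [show (mstrat A χ s t ρQ ρR w_t loop hwt).move = mmove A χ s ρQ ρR w_t loop
        from rfl, mmove_true A χ s ρQ ρR w_t loop hp] at hmv
      by_cases hc : loop = true ∧ χ u = s ∧ ρR.move h₂ u = none
      · -- jump from phase 2 (loop case)
        rw [if_pos hc] at hmv
        obtain rfl : w_t = w := by injection hmv
        refine Or.inr ⟨H₁ ++ (h₂ ++ [u]), [], by simp, ?_, ConsPath.refl, ?_⟩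
        · rw [parse_append, hp, mstep_true, if_pos hc]
        · obtain ⟨q, hq, hqle⟩ := stop_prefix_bound A rank χ hB ρR w_t hR hcp'
            (fun _ => hc.2.2)
          rw [hc.2.1] at hq
          obtain ⟨r₀, hr₀, hr₀even⟩ := hloopR hc.1
          rw [hr₀] at hq
          obtain rfl : r₀ = q := by injection hq
          have hseg : (maxRank rank (h₂ ++ [u])) % 2 = 0 := (preceq_even hqle hr₀even).1
          rw [maxRank_append]
          exact preceq_max_even hpre hseg
      · rw [if_neg hc] at hmv
        refine Or.inr ⟨H₁, h₂ ++ [u], by rw [List.append_assoc], ?_,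
          ConsPath.stepE h₂ u w hcp' how hmv, hpre⟩
        rw [parse_append, hp, mstep_true, if_neg hc]

end Merged3

section Merged4

attribute [local instance] Classical.propDecidable

lemma emerge_left {C : Type*} {CE : Set C} {Q R : C → Option ℕ} {s : C} {r : ℕ}
    (hQs : Q s = some r) (hs : s ∈ CE) {a : C} {q : ℕ} (ha : a ≠ s)
    (hQa : Q a = some q) : ∃ z, emerge CE Q s R a = some z ∧ preceq z q := by
  unfold emerge
  rw [hQs]
  simp only [if_pos hs, eunion]
  rw [if_neg ha, hQa]
  rcases hR : elift R r a with _ | y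
  · exact ⟨q, rfl, preceq_refl q⟩
  · by_cases hqy : preceq q y
    · exact ⟨q, by simp [if_pos hqy], preceq_refl q⟩
    · refine ⟨y, by simp [if_neg hqy], ?_⟩
      rcases preceq_total q y with h | h
      · exact absurd h hqy
      · exact h

lemma emerge_right {C : Type*} {CE : Set C} {Q R : C → Option ℕ} {s : C} {r : ℕ}
    (hQs : Q s = some r) (hs : s ∈ CE) {a : C} {y : ℕ}
    (hRa : elift R r a = some y) : ∃ z, emerge CE Q s R a = some z ∧ preceq z y := by
  unfold emerge
  rw [hQs]
  simp only [if_pos hs, eunion]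
  rw [hRa]
  rcases hQa : (if a = s then none else Q a : Option ℕ) with _ | q
  · exact ⟨y, rfl, preceq_refl y⟩
  · by_cases hqy : preceq q y
    · exact ⟨q, by simp [if_pos hqy], hqy⟩
    · exact ⟨y, by simp [if_neg hqy], preceq_refl y⟩

variable {V C : Type*} (A : Arena V) (rank : V → ℕ) (CE : Set C) (χ : V → C)
  (s t : C) (ρQ ρR : EStrategy A) (w_t : V) (loop : Bool) (hwt : χ w_t = t)
  (hχ : ∀ u, A.owner u = true ↔ χ u ∈ CE) (hs : s ∈ CE)
  {B : ℕ} (hB : ∀ u, rank u ≤ B)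
  {Q R' Rfin : C → Option ℕ} {v : V} {r : ℕ}
  (hQ : esub (Phi A rank χ ρQ v) Q) (hQs : Q s = some r)
  (hR : esub (Phi A rank χ ρR w_t) R')
  (hloopR : loop = true → ∃ r₀, R' s = some r₀ ∧ r₀ % 2 = 0)
  (hRfin : ∀ a, (loop = true → a ≠ s) → Rfin a = R' a)

include hχ hs hB hQ hQs hR hloopR hRfin in
lemma merged_esub :
    esub (Phi (addEdges A χ s t) rank χ (mstrat A χ s t ρQ ρR w_t loop hwt) v)
      (emerge CE Q s Rfin) := by
  intro a p hp
  obtain ⟨hmem, -⟩ := pmin_eq_some hp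
  obtain ⟨w, H, hwa, hcp, hstop, rfl⟩ := hmem
  subst hwa
  have howner : (addEdges A χ s t).owner w = A.owner w := rfl
  rcases merged_inv A rank CE χ s t ρQ ρR w_t loop hwt hχ hs hB hQ hQs hR hloopR hcp
    with ⟨hp1, hcpQ⟩ | ⟨H₁, h₂, rfl, hp2, hcpR, hpre⟩
  · -- phase 1
    have key : χ w ≠ s ∧ (A.owner w = true → ρQ.move H w = none) := by
      by_cases how : A.owner w = true
      · have hmv := hstop (howner ▸ how)
        rw [show (mstrat A χ s t ρQ ρR w_t loop hwt).move = mmove A χ s ρQ ρR w_t loop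
          from rfl, mmove_false A χ s ρQ ρR w_t loop hp1] at hmv
        by_cases hc : χ w = s ∧ ρQ.move H w = none
        · rw [if_pos hc] at hmv; exact absurd hmv (by simp)
        · rw [if_neg hc] at hmv
          exact ⟨fun hws => hc ⟨hws, hmv⟩, fun _ => hmv⟩
      · exact ⟨owner_false_ne_s A CE χ s hχ hs (by simpa using how),
          fun h => absurd h how⟩
    obtain ⟨q, hq, hqp⟩ := stop_prefix_bound A rank χ hB ρQ v hQ hcpQ key.2
    obtain ⟨z, hz, hzq⟩ := emerge_left (R := Rfin) hQs hs key.1 hq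
    exact ⟨z, hz, preceq_trans hzq hqp⟩
  · -- phase 2
    have key : (loop = true → χ w ≠ s) ∧ (A.owner w = true → ρR.move h₂ w = none) := by
      by_cases how : A.owner w = true
      · have hmv := hstop (howner ▸ how)
        rw [show (mstrat A χ s t ρQ ρR w_t loop hwt).move = mmove A χ s ρQ ρR w_t loop
          from rfl, mmove_true A χ s ρQ ρR w_t loop hp2] at hmv
        by_cases hc : loop = true ∧ χ w = s ∧ ρR.move h₂ w = none
        · rw [if_pos hc] at hmv; exact absurd hmv (by simp)
        · rw [if_neg hc] at hmv
          exact ⟨fun hl hws => hc ⟨hl, hws, hmv⟩, fun _ => hmv⟩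
      · exact ⟨fun _ => owner_false_ne_s A CE χ s hχ hs (by simpa using how),
          fun h => absurd h how⟩
    obtain ⟨q₂, hq₂, hq₂le⟩ := stop_prefix_bound A rank χ hB ρR w_t hR hcpR key.2
    have hRval : Rfin (χ w) = some q₂ := by rw [hRfin (χ w) key.1]; exact hq₂
    have hlift : elift Rfin r (χ w) = some (max q₂ r) := by
      unfold elift; rw [hRval]; rfl
    obtain ⟨z, hz, hzq⟩ := emerge_right hQs hs hlift
    refine ⟨z, hz, preceq_trans hzq ?_⟩
    rw [Nat.max_comm q₂ r, List.append_assoc, maxRank_append]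
    exact preceq_max_mono hpre hq₂le

end Merged4

section Merged5

attribute [local instance] Classical.propDecidable

variable {V C : Type*} (A : Arena V) (rank : V → ℕ) (CE : Set C) (χ : V → C)
  (s t : C) (ρQ ρR : EStrategy A) (w_t : V) (loop : Bool) (hwt : χ w_t = t)
  (hχ : ∀ u, A.owner u = true ↔ χ u ∈ CE) (hs : s ∈ CE)
  {B : ℕ} (hB : ∀ u, rank u ≤ B)
  {R' : C → Option ℕ} {v : V}
  (hR : esub (Phi A rank χ ρR w_t) R')
  (hloopR : loop = true → ∃ r₀, R' s = some r₀ ∧ r₀ % 2 = 0)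
  (hQsafe : SafeFrom A rank ρQ v) (hRsafe : SafeFrom A rank ρR w_t)

include hχ hs hB hR hloopR hQsafe hRsafe in
lemma merged_safe :
    SafeFrom (addEdges A χ s t) rank (mstrat A χ s t ρQ ρR w_t loop hwt) v := by
  intro p hcons howins
  rcases howins with ⟨n, u, hsu, hsn, hstp, how⟩ | ⟨hinf, hodd⟩
  · -- a finite play ending at a vertex of E contradicts consistency
    have h2 := (hcons n u hsu how).2 hsn
    rw [h2] at hstp; cases hstp
  · -- infinite play
    have hfex : ∀ n, ∃ u, p.seq n = some u := by
      intro n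
      rcases h : p.seq n with _ | u
      · exact absurd h (hinf n)
      · exact ⟨u, rfl⟩
    choose f hf using hfex
    have hfu : ∀ {n : ℕ} {u : V}, p.seq n = some u → u = f n := by
      intro n u h; rw [hf n] at h; injection h with h; exact h.symm
    have hf0 : f 0 = v := (hfu p.start).symm
    have hhist : ∀ n, p.hist n = (List.range n).map f := by
      intro n; exact filterMap_somes _ _ _ (fun a _ => hf a)
    have hhist0 : p.hist 0 = [] := by rw [hhist]; rfl
    have hhist_succ : ∀ n, p.hist (n + 1) = p.hist n ++ [f n] := by
      intro n; rw [hhist, hhist, List.range_succ, List.map_append]; rfl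
    have hcons' : ∀ n, A.owner (f n) = true →
        some (f (n + 1)) = mmove A χ s ρQ ρR w_t loop (p.hist n) (f n) := by
      intro n how
      have h1 := (hcons n (f n) (hf n) how).1
      rw [hf (n + 1)] at h1
      exact h1
    have hedge : ∀ n, (addEdges A χ s t).edge (f n) (f (n + 1)) :=
      fun n => p.step n _ _ (hf n) (hf (n + 1))
    have hOedge : ∀ n, A.owner (f n) = false → A.edge (f n) (f (n + 1)) := by
      intro n how
      rcases hedge n with h | ⟨h1, -⟩
      · exact h
      · exact absurd h1 (owner_false_ne_s A CE χ s hχ hs how)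
    set T := {n : ℕ | parse A χ s ρQ ρR loop (p.hist n) = (true, [])} with hT
    have hT0 : 0 ∉ T := by
      intro h0
      rw [hT, Set.mem_setOf_eq, hhist0, parse_nil] at h0
      simp at h0
    have hTw : ∀ N ∈ T, f N = w_t := by
      intro N hN
      rcases N with _ | n
      · exact absurd hN hT0
      · have hp1 : parse A χ s ρQ ρR loop (p.hist (n + 1)) =
            mstep A χ s ρQ ρR loop (parse A χ s ρQ ρR loop (p.hist n)) (f n) := by
          rw [hhist_succ n, parse_append]
        have hN' : mstep A χ s ρQ ρR loop (parse A χ s ρQ ρR loop (p.hist n)) (f n)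
            = (true, []) := by rw [← hp1]; exact hN
        rcases hparse : parse A χ s ρQ ρR loop (p.hist n) with ⟨b, h'⟩
        rw [hparse] at hN'
        cases b
        · rw [mstep_false] at hN'
          by_cases hc : χ (f n) = s ∧ ρQ.move h' (f n) = none
          · have how : A.owner (f n) = true := (hχ _).mpr (by rw [hc.1]; exact hs)
            have h1 := hcons' n how
            rw [mmove_false A χ s ρQ ρR w_t loop hparse, if_pos hc] at h1
            exact Option.some.inj h1
          · rw [if_neg hc] at hN'; simp at hN'
        · rw [mstep_true] at hN'
          by_cases hc : loop = true ∧ χ (f n) = s ∧ ρR.move h' (f n) = none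
          · have how : A.owner (f n) = true := (hχ _).mpr (by rw [hc.2.1]; exact hs)
            have h1 := hcons' n how
            rw [mmove_true A χ s ρQ ρR w_t loop hparse, if_pos hc] at h1
            exact Option.some.inj h1
          · rw [if_neg hc] at hN'; simp at hN'
    -- the phase-2 invariant on jump-free windows
    have hseg : ∀ N, N ∈ T → ∀ m, (∀ k, N < k → k ≤ N + m → k ∉ T) →
        parse A χ s ρQ ρR loop (p.hist (N + m)) =
          (true, (List.range m).map (fun i => f (N + i))) ∧
        ConsPath A ρR w_t ((List.range m).map (fun i => f (N + i))) (f (N + m)) := by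
      intro N hN m
      induction m with
      | zero =>
        intro _
        simp only [Nat.add_zero, List.range_zero, List.map_nil]
        refine ⟨hN, ?_⟩
        rw [hTw N hN]
        exact ConsPath.refl
      | succ m ih =>
        intro hnj
        obtain ⟨hp2, hcp2⟩ := ih (fun k h1 h2 => hnj k h1 (by omega))
        have hstep2 : parse A χ s ρQ ρR loop (p.hist (N + m + 1)) =
            mstep A χ s ρQ ρR loop (true, (List.range m).map (fun i => f (N + i)))
              (f (N + m)) := by
          rw [hhist_succ (N + m), parse_append, hp2]
        have hnc : ¬(loop = true ∧ χ (f (N + m)) = s ∧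
            ρR.move ((List.range m).map (fun i => f (N + i))) (f (N + m)) = none) := by
          intro hc
          apply hnj (N + m + 1) (by omega) (by omega)
          rw [hT, Set.mem_setOf_eq, hstep2, mstep_true, if_pos hc]
        have hrange : (List.range (m + 1)).map (fun i => f (N + i)) =
            (List.range m).map (fun i => f (N + i)) ++ [f (N + m)] := by
          rw [List.range_succ, List.map_append]; rfl
        have hidx : N + (m + 1) = N + m + 1 := rfl
        rw [hidx, hrange]
        constructor
        · rw [hstep2, mstep_true, if_neg hnc]
        · by_cases how : A.owner (f (N + m)) = true
          · have h1 := hcons' (N + m) how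
            rw [mmove_true A χ s ρQ ρR w_t loop hp2, if_neg hnc] at h1
            exact ConsPath.stepE _ _ _ hcp2 how h1.symm
          · have how' : A.owner (f (N + m)) = false := by simpa using how
            exact ConsPath.stepO _ _ _ hcp2 how' (hOedge _ how')
    -- the phase-1 invariant when no jump ever occurs
    have hseg1 : ∀ m, (∀ k, k ≤ m → k ∉ T) →
        parse A χ s ρQ ρR loop (p.hist m) = (false, p.hist m) ∧
        ConsPath A ρQ v (p.hist m) (f m) := by
      intro m
      induction m with
      | zero =>
        intro _
        rw [hhist0]
        refine ⟨parse_nil A χ s ρQ ρR loop, ?_⟩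
        rw [← hf0] at *
        exact ConsPath.refl
      | succ m ih =>
        intro hnj
        obtain ⟨hp1, hcp1⟩ := ih (fun k hk => hnj k (by omega))
        have hstep1 : parse A χ s ρQ ρR loop (p.hist (m + 1)) =
            mstep A χ s ρQ ρR loop (false, p.hist m) (f m) := by
          rw [hhist_succ m, parse_append, hp1]
        have hnc : ¬(χ (f m) = s ∧ ρQ.move (p.hist m) (f m) = none) := by
          intro hc
          apply hnj (m + 1) (le_refl _)
          rw [hT, Set.mem_setOf_eq, hstep1, mstep_false, if_pos hc]
        constructor
        · rw [hstep1, mstep_false, if_neg hnc, hhist_succ m]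
        · rw [hhist_succ m]
          by_cases how : A.owner (f m) = true
          · have h1 := hcons' m how
            rw [mmove_false A χ s ρQ ρR w_t loop hp1, if_neg hnc] at h1
            exact ConsPath.stepE _ _ _ hcp1 how h1.symm
          · have how' : A.owner (f m) = false := by simpa using how
            exact ConsPath.stepO _ _ _ hcp1 how' (hOedge _ how')
    by_cases hTe : ∀ n, n ∉ T
    · -- the whole play is consistent with ρQ
      have hls := fun m => hseg1 m (fun k _ => hTe k)
      have hmvQ : ∀ n, A.owner (f n) = true →
          ρQ.move (p.hist n) (f n) = some (f (n + 1)) := by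
        intro n how
        have h1 := hcons' n how
        rw [mmove_false A χ s ρQ ρR w_t loop (hls n).1] at h1
        by_cases hc : χ (f n) = s ∧ ρQ.move (p.hist n) (f n) = none
        · exfalso
          apply hTe (n + 1)
          rw [hT, Set.mem_setOf_eq, hhist_succ n, parse_append, (hls n).1,
            mstep_false, if_pos hc]
        · rw [if_neg hc] at h1; exact h1.symm
      set q : Play A v :=
        { seq := p.seq, stopped := p.stopped, start := p.start,
          none_succ := fun n h => absurd h (hinf n),
          step := by
            intro n u w h1 h2
            obtain rfl : u = f n := hfu h1
            obtain rfl : w = f (n + 1) := hfu h2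
            by_cases how : A.owner (f n) = true
            · exact ρQ.legal _ _ _ (hmvQ n how)
            · have how' : A.owner (f n) = false := by simpa using how
              exact hOedge n how'
          maximal := fun n u h1 h2 => absurd h2 (hinf (n + 1)) } with hq
      have hqcons : ConsistentWith ρQ q := by
        intro n u h1 how
        obtain rfl : u = f n := hfu h1
        refine ⟨?_, fun h => absurd h (hinf (n + 1))⟩
        show p.seq (n + 1) = ρQ.move (q.hist n) (f n)
        have hqh : q.hist n = p.hist n := rfl
        rw [hqh, hf (n + 1), hmvQ n how]
      exact hQsafe q hqcons (Or.inr ⟨hinf, hodd⟩)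
    · -- T is nonempty
      simp only [not_forall, not_not] at hTe
      obtain ⟨n₀, hn₀⟩ := hTe
      by_cases hTb : ∃ Nb, ∀ n ∈ T, n ≤ Nb
      · -- T is bounded: the play eventually follows ρR
        obtain ⟨Nb, hNb⟩ := hTb
        have hTbdd : BddAbove T := ⟨Nb, fun n hn => hNb n hn⟩
        set N := sSup T with hNdef
        have hNT : N ∈ T := Nat.sSup_mem ⟨n₀, hn₀⟩ hTbdd
        have hnoj : ∀ k, N < k → k ∉ T := by
          intro k h1 hk
          have := le_csSup hTbdd hk
          omega
        have hsegN := fun m => hseg N hNT m (fun k h1 _ => hnoj k h1)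
        have hmvR : ∀ m, A.owner (f (N + m)) = true →
            ρR.move ((List.range m).map (fun i => f (N + i))) (f (N + m)) =
              some (f (N + m + 1)) := by
          intro m how
          have h1 := hcons' (N + m) how
          rw [mmove_true A χ s ρQ ρR w_t loop (hsegN m).1] at h1
          by_cases hc : loop = true ∧ χ (f (N + m)) = s ∧
              ρR.move ((List.range m).map (fun i => f (N + i))) (f (N + m)) = none
          · exfalso
            apply hnoj (N + m + 1) (by omega)
            rw [hT, Set.mem_setOf_eq, hhist_succ (N + m), parse_append, (hsegN m).1,
              mstep_true, if_pos hc]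
          · rw [if_neg hc] at h1; exact h1.symm
        set q : Play A w_t :=
          { seq := fun m => p.seq (N + m), stopped := p.stopped,
            start := by
              show p.seq (N + 0) = some w_t
              rw [Nat.add_zero, hf N, hTw N hNT],
            none_succ := fun m h => absurd h (hinf (N + m)),
            step := by
              intro m u w h1 h2
              obtain rfl : u = f (N + m) := hfu h1
              obtain rfl : w = f (N + m + 1) := hfu h2
              by_cases how : A.owner (f (N + m)) = true
              · exact ρR.legal _ _ _ (hmvR m how)
              · have how' : A.owner (f (N + m)) = false := by simpa using how
                exact hOedge (N + m) how'
            maximal := fun m u h1 h2 => absurd h2 (hinf (N + m + 1)) } with hq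
        have hqhist : ∀ m, q.hist m = (List.range m).map (fun i => f (N + i)) := by
          intro m
          exact filterMap_somes _ _ _ (fun a _ => hf (N + a))
        have hqcons : ConsistentWith ρR q := by
          intro m u h1 how
          obtain rfl : u = f (N + m) := hfu h1
          refine ⟨?_, fun h => absurd h (hinf (N + m + 1))⟩
          show p.seq (N + m + 1) = ρR.move (q.hist m) (f (N + m))
          rw [hqhist m, hf (N + m + 1), hmvR m how]
        apply hRsafe q hqcons
        refine Or.inr ⟨fun m => hinf (N + m), ?_⟩
        have hIR : infRank rank q = infRank rank p := by
          unfold infRank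
          congr 1
          ext x
          simp only [Set.mem_setOf_eq]
          constructor
          · intro hx N'
            obtain ⟨n, hn1, u, hu, hr⟩ := hx N'
            exact ⟨N + n, by omega, u, hu, hr⟩
          · intro hx N'
            obtain ⟨n, hn1, u, hu, hr⟩ := hx (N + N')
            refine ⟨n - N, by omega, u, ?_, hr⟩
            show p.seq (N + (n - N)) = some u
            rw [show N + (n - N) = n by omega]
            exact hu
        rw [hIR]
        exact hodd
      · -- T is unbounded: the maximal rank seen infinitely often is even
        push_neg at hTb
        have hTub : ∀ Nb : ℕ, ∃ n ∈ T, Nb < n := by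
          intro Nb
          obtain ⟨n, hn1, hn2⟩ := hTb Nb
          exact ⟨n, hn1, by omega⟩
        set SI := {x : ℕ | ∀ N' : ℕ, ∃ n, N' ≤ n ∧ ∃ u, p.seq n = some u ∧ rank u = x}
          with hSI
        have hSIb : ∀ x ∈ SI, x ≤ B := by
          intro x hx
          obtain ⟨n, -, u, hu, rfl⟩ := hx 0
          exact hB u
        have hSIne : SI.Nonempty := by
          obtain ⟨x, hx⟩ := pigeon (fun n => rank (f n)) B (fun n => hB (f n))
            (fun _ => True) (fun N => ⟨N, le_refl N, trivial⟩)
          refine ⟨x, fun N' => ?_⟩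
          obtain ⟨n, h1, -, h2⟩ := hx N'
          exact ⟨n, h1, f n, hf n, h2⟩
        have hDSI : infRank rank p ∈ SI :=
          Nat.sSup_mem hSIne ⟨B, fun x hx => hSIb x hx⟩
        set D := infRank rank p with hDdef
        have hclaim : ∀ N', ∃ j, N' ≤ j ∧ (rank (f j)) % 2 = 0 ∧ D ≤ rank (f j) := by
          intro N'
          obtain ⟨n₁, hn₁T, hn₁⟩ := hTub N'
          obtain ⟨k, hk1, uk, huk, hrk⟩ := hDSI n₁
          obtain rfl : uk = f k := hfu huk
          obtain ⟨n₂, hn₂T, hn₂⟩ := hTub k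
          set T1 := T ∩ Set.Iic k with hT1
          have hT1ne : T1.Nonempty := ⟨n₁, hn₁T, hk1⟩
          have hT1bdd : BddAbove T1 := ⟨k, fun x hx => hx.2⟩
          set a := sSup T1 with ha
          have haT : a ∈ T1 := Nat.sSup_mem hT1ne hT1bdd
          have ha1 : n₁ ≤ a := le_csSup hT1bdd ⟨hn₁T, hk1⟩
          set T2 := {m | m ∈ T ∧ k < m} with hT2
          have hT2ne : T2.Nonempty := ⟨n₂, hn₂T, hn₂⟩
          set b := sInf T2 with hb
          have hbT : b ∈ T2 := Nat.sInf_mem hT2ne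
          have hnob : ∀ j, a < j → j < b → j ∉ T := by
            intro j h1 h2 hj
            rcases le_or_gt j k with h3 | h3
            · have : j ≤ a := le_csSup hT1bdd ⟨hj, h3⟩
              omega
            · have : b ≤ j := Nat.sInf_le ⟨hj, h3⟩
              omega
          have hab : a ≤ k := haT.2
          have hkb : k < b := hbT.2
          have hm := hseg a haT.1 (b - 1 - a) (fun k' h1 h2 => hnob k' h1 (by omega))
          rw [show a + (b - 1 - a) = b - 1 by omega] at hm
          set g := (List.range (b - 1 - a)).map (fun i => f (a + i)) with hg
          have hbT' : parse A χ s ρQ ρR loop (p.hist (b - 1 + 1)) = (true, []) := by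
            rw [show b - 1 + 1 = b by omega]
            exact hbT.1
          have hstep2 : parse A χ s ρQ ρR loop (p.hist (b - 1 + 1)) =
              mstep A χ s ρQ ρR loop (true, g) (f (b - 1)) := by
            rw [hhist_succ (b - 1), parse_append, hm.1]
          have hc : loop = true ∧ χ (f (b - 1)) = s ∧ ρR.move g (f (b - 1)) = none := by
            by_contra hc
            rw [hstep2, mstep_true, if_neg hc] at hbT'
            simp at hbT'
          obtain ⟨q₂, hq₂, hq₂le⟩ := stop_prefix_bound A rank χ hB ρR w_t hR hm.2
            (fun _ => hc.2.2)
          obtain ⟨r₀, hr₀, hr₀e⟩ := hloopR hc.1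
          rw [hc.2.1, hr₀] at hq₂
          obtain rfl : r₀ = q₂ := by injection hq₂
          have hev := preceq_even hq₂le hr₀e
          set X := maxRank rank (g ++ [f (b - 1)]) with hX
          have hkmem : f k ∈ g ++ [f (b - 1)] := by
            rcases eq_or_lt_of_le (show k ≤ b - 1 by omega) with h4 | h4
            · rw [h4]
              exact List.mem_append_right _ (List.mem_singleton_self _)
            · refine List.mem_append_left _ ?_
              rw [hg]
              refine List.mem_map.mpr ⟨k - a, ?_, by rw [show a + (k - a) = k by omega]⟩
              exact List.mem_range.mpr (by omega)
          have hDX : D ≤ X := by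
            rw [← hrk]
            exact le_maxRank rank hkmem
          obtain ⟨u', hu', hru'⟩ := maxRank_attained rank
            (l := g ++ [f (b - 1)]) (by simp)
          have hj : ∃ j, a ≤ j ∧ u' = f j := by
            rcases List.mem_append.mp hu' with h4 | h4
            · rw [hg] at h4
              obtain ⟨i, hi, rfl⟩ := List.mem_map.mp h4
              exact ⟨a + i, by omega, rfl⟩
            · rw [List.mem_singleton.mp h4]
              exact ⟨b - 1, by omega, rfl⟩
          obtain ⟨j, hj1, rfl⟩ := hj
          exact ⟨j, by omega, by rw [← hru']; exact hev.1, by rw [← hru']; exact hDX⟩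
        obtain ⟨E, hE⟩ := pigeon (fun n => rank (f n)) B (fun n => hB (f n))
          (fun j => (rank (f j)) % 2 = 0 ∧ D ≤ rank (f j)) hclaim
        have hE0 : E % 2 = 0 ∧ D ≤ E := by
          obtain ⟨n, -, hP, hgn⟩ := hE 0
          rw [← hgn]
          exact hP
        have hESI : E ∈ SI := by
          intro N'
          obtain ⟨n, h1, -, hgn⟩ := hE N'
          exact ⟨n, h1, f n, hf n, hgn⟩
        have hED : E ≤ D := le_csSup ⟨B, fun x hx => hSIb x hx⟩ hESI
        have hD1 : D % 2 = 1 := Nat.odd_iff.mp hodd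
        omega

end Merged5

section Lift

variable {V C : Type*} (A : Arena V) (rank : V → ℕ) (CE : Set C) (χ : V → C)
  (s t : C) (hχ : ∀ u, A.owner u = true ↔ χ u ∈ CE) (hs : s ∈ CE)

/-- A strategy of the original arena, viewed as a strategy of the extended arena. -/
def liftStrat (ρ : EStrategy A) : EStrategy (addEdges A χ s t) where
  move := ρ.move
  legal := fun h u w hm => Or.inl (ρ.legal h u w hm)

lemma lift_cp1 {ρ : EStrategy A} {v : V} {h : List V} {u : V}
    (hcp : ConsPath A ρ v h u) :
    ConsPath (addEdges A χ s t) (liftStrat A χ s t ρ) v h u := by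
  induction hcp with
  | refl => exact ConsPath.refl
  | stepO h u w hcp how hedge ih => exact ConsPath.stepO h u w ih how (Or.inl hedge)
  | stepE h u w hcp how hmv ih => exact ConsPath.stepE h u w ih how hmv

include hχ hs in
lemma lift_cp2 {ρ : EStrategy A} {v : V} {h : List V} {u : V}
    (hcp : ConsPath (addEdges A χ s t) (liftStrat A χ s t ρ) v h u) :
    ConsPath A ρ v h u := by
  induction hcp with
  | refl => exact ConsPath.refl
  | stepO h u w hcp how hedge ih =>
    refine ConsPath.stepO h u w ih how ?_
    rcases hedge with h1 | ⟨h1, -⟩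
    · exact h1
    · exact absurd h1 (owner_false_ne_s A CE χ s hχ hs how)
  | stepE h u w hcp how hmv ih => exact ConsPath.stepE h u w ih how hmv

include hχ hs in
lemma lift_Phi (ρ : EStrategy A) (v : V) :
    Phi (addEdges A χ s t) rank χ (liftStrat A χ s t ρ) v = Phi A rank χ ρ v := by
  funext c
  unfold Phi
  congr 1
  apply Set.ext
  intro x
  constructor
  · rintro ⟨w, h, h1, h2, h3, h4⟩
    exact ⟨w, h, h1, lift_cp2 A CE χ s t hχ hs h2, h3, h4⟩
  · rintro ⟨w, h, h1, h2, h3, h4⟩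
    exact ⟨w, h, h1, lift_cp1 A χ s t h2, h3, h4⟩

include hχ hs in
lemma lift_safe {ρ : EStrategy A} {v : V} (hsafe : SafeFrom A rank ρ v) :
    SafeFrom (addEdges A χ s t) rank (liftStrat A χ s t ρ) v := by
  intro p hcons howins
  set q : Play A v :=
    { seq := p.seq, stopped := p.stopped, start := p.start,
      none_succ := p.none_succ,
      step := by
        intro n u w h1 h2
        by_cases how : A.owner u = true
        · have hc := (hcons n u h1 how).1
          rw [h2] at hc
          exact ρ.legal _ _ _ hc.symm
        · have how' : A.owner u = false := by simpa using how
          rcases p.step n u w h1 h2 with h3 | ⟨h3, -⟩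
          · exact h3
          · exact absurd h3 (owner_false_ne_s A CE χ s hχ hs how')
      maximal := by
        intro n u h1 h2
        rcases p.maximal n u h1 h2 with ⟨h3, h4⟩ | ⟨h3, h4⟩
        · exact Or.inl ⟨h3, h4⟩
        · exact Or.inr ⟨h3, fun w hw => h4 w (Or.inl hw)⟩ } with hq
  have hqcons : ConsistentWith ρ q := by
    intro n u h1 how
    exact hcons n u h1 how
  exact hsafe q hqcons howins

end Lift
theorem stmt17 {V C : Type*} [Fintype V] [Fintype C] (A : Arena V) (rank : V → ℕ)
    (CE : Set C) (χ : V → C) (hχ : ∀ u, A.owner u = true ↔ χ u ∈ CE)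
    (s t : C) (hs : s ∈ CE)
    (Afam : V → Set (C → Option ℕ))
    (hvalid : ∀ v, ValidFamily A rank χ v (Afam v))
    (v : V) (P : C → Option ℕ)
    (hP : ∃ P₀ : C → Option ℕ, esub P₀ P ∧
      (P₀ ∈ Afam v ∨
        ∃ Q ∈ Afam v, Q s ≠ none ∧
          ∃ R : C → Option ℕ,
            ((∃ w, χ w = t ∧ R ∈ Afam w) ∨
              (∃ R₀, (∃ w, χ w = t ∧ R₀ ∈ Afam w) ∧ (∃ r, R₀ s = some r ∧ Even r) ∧
                R = removeColor R₀ s)) ∧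
            P₀ = emerge CE Q s R)) :
    ∃ ρ : EStrategy (addEdges A χ s t),
      SafeFrom (addEdges A χ s t) rank ρ v ∧
        esub (Phi (addEdges A χ s t) rank χ ρ v) P := by
  obtain ⟨P₀, hP₀P, hcase⟩ := hP
  have hB : ∀ u, rank u ≤ Finset.univ.sup rank :=
    fun u => Finset.le_sup (Finset.mem_univ u)
  rcases hcase with hmem | ⟨Q, hQmem, hQs, R, hRcase, rfl⟩
  · obtain ⟨ρ, hsafe, hesub⟩ := (hvalid v).1 P₀ hmem
    refine ⟨liftStrat A χ s t ρ, lift_safe A rank CE χ s t hχ hs hsafe, ?_⟩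
    rw [lift_Phi A rank CE χ s t hχ hs]
    exact esub_trans hesub hP₀P
  · obtain ⟨r, hr⟩ : ∃ r, Q s = some r := by
      rcases h : Q s with _ | r
      · exact absurd h hQs
      · exact ⟨r, rfl⟩
    obtain ⟨ρQ, hQsafe, hQesub⟩ := (hvalid v).1 Q hQmem
    rcases hRcase with ⟨w, hwt, hRmem⟩ | ⟨R₀, ⟨w, hwt, hRmem⟩, ⟨r₀, hr₀, hr₀e⟩, rfl⟩
    · -- non-looped merge
      obtain ⟨ρR, hRsafe, hResub⟩ := (hvalid w).1 R hRmem
      have hloopR : (false : Bool) = true → ∃ r₀, R s = some r₀ ∧ r₀ % 2 = 0 :=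
        fun h => absurd h Bool.false_ne_true
      refine ⟨mstrat A χ s t ρQ ρR w false hwt, ?_, ?_⟩
      · exact merged_safe A rank CE χ s t ρQ ρR w false hwt hχ hs hB hResub hloopR
          hQsafe hRsafe
      · exact esub_trans (merged_esub A rank CE χ s t ρQ ρR w false hwt hχ hs hB
          hQesub hr hResub hloopR (fun a _ => rfl)) hP₀P
    · -- looped merge
      obtain ⟨ρR, hRsafe, hResub⟩ := (hvalid w).1 R₀ hRmem
      have hloopR : (true : Bool) = true → ∃ r₀', R₀ s = some r₀' ∧ r₀' % 2 = 0 :=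
        fun _ => ⟨r₀, hr₀, Nat.even_iff.mp hr₀e⟩
      have hRfin : ∀ a, ((true : Bool) = true → a ≠ s) → removeColor R₀ s a = R₀ a := by
        intro a ha
        unfold removeColor
        rw [if_neg (ha rfl)]
      refine ⟨mstrat A χ s t ρQ ρR w true hwt, ?_, ?_⟩
      · exact merged_safe A rank CE χ s t ρQ ρR w true hwt hχ hs hB hResub hloopR
          hQsafe hRsafe
      · exact esub_trans (merged_esub A rank CE χ s t ρQ ρR w true hwt hχ hs hB
          hQesub hr hResub hloopR hRfin) hP₀P
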